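/- Let α be a right-maximal repeat of a string w. If two occurrences of α in w overlap with overlap length d (i.e., they start at positions i < j with j < i + |α| and d = i + |α| − j), then no prefix β of α with |β| ≤ d is α-extendable. -/

import Mathlib

/-!
With `p = j - i` and `d = i + |α| - j`, the two overlapping occurrences force the suffix of `α`
of length `d` to coincide with its prefix of length `d`. Every occurrence of `α` at `m` yields an
occurrence of that suffix at `m + p`, followed by the same character as `α`; so the prefix
`α.take d` is already a right-maximal repeat. It lies strictly between `β` and `α`, hence
`r(β) ≠ α`.
-/

open Set List

variable {A : Type*}

/-- `β` occurs in `w` at (0-indexed) position `i`, i.e. `w[i..i+|β|-1] = β`. -/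
def OccursAt (w β : List A) (i : ℕ) : Prop := β <+: w.drop i

/-- A repeat of `w`: a nonempty string occurring in `w` at two distinct positions. -/
def IsRepeat (w β : List A) : Prop :=
  β ≠ [] ∧ ∃ i j, i ≠ j ∧ OccursAt w β i ∧ OccursAt w β j

/-- A right-maximal repeat of `w`: a repeat with two occurrences whose right-adjacent
characters differ.  The right-adjacent character of the occurrence at `i` is
`w[i+|β|]?  : Option A`; the value `none` (an occurrence at the right end of `w`)
plays the role of the special character distinct from all alphabet characters. -/
def IsRMRepeat (w β : List A) : Prop :=
  β ≠ [] ∧ ∃ i j, i ≠ j ∧ OccursAt w β i ∧ OccursAt w β j ∧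
    w[i + β.length]? ≠ w[j + β.length]?

/-- `RightExtClosure w β α` says that `α = r(β)`, the right-maximal repeat obtained
from `β` by repeatedly appending the unique common right-adjacent character of all
of its occurrences: equivalently, `α` is a right-maximal repeat of `w` extending `β`
such that no intermediate extension `γ` (with `β ≤ γ < α`) is already right-maximal. -/
def RightExtClosure (w β α : List A) : Prop :=
  IsRMRepeat w α ∧ β <+: α ∧
    ∀ γ, β <+: γ → γ <+: α → γ ≠ α → ¬ IsRMRepeat w γ

theorem OccursAt.drop {w α : List A} {m : ℕ} (h : OccursAt w α m) (k : ℕ) :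
    OccursAt w (α.drop k) (m + k) := by
  simpa [OccursAt] using IsPrefix.drop h k

theorem IsRMRepeat.drop {w α : List A} (hα : IsRMRepeat w α) {k : ℕ} (hk : α.drop k ≠ []) :
    IsRMRepeat w (α.drop k) := by
  obtain ⟨-, i, j, hij, hi, hj, hnext⟩ := hα
  have hlt : k < α.length := by simpa using hk
  have hend : ∀ m, m + k + (α.drop k).length = m + α.length := by simp; omega
  exact ⟨hk, i + k, j + k, by omega, hi.drop k, hj.drop k, by rwa [hend, hend]⟩

theorem drop_eq_take_of_occursAt {w α : List A} {i j : ℕ} (hi : OccursAt w α i)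
    (hj : OccursAt w α j) (hij : i ≤ j) :
    α.drop (j - i) = α.take (i + α.length - j) := by
  have hsuffix : OccursAt w (α.drop (j - i)) j := by
    simpa [show i + (j - i) = j by omega] using hi.drop (j - i)
  have hprefix : OccursAt w (α.take (i + α.length - j)) j := (take_prefix _ α).trans hj
  exact (prefix_of_prefix_length_le hsuffix hprefix (by simp; omega)).eq_of_length
    (by simp; omega)

/-- if two occurrences of a right-maximal repeat `α` of `w` overlap with
overlap length `d = i + |α| − j`, then no nonempty prefix `β` of `α` with `|β| ≤ d`
is `α`-extendable. -/
theorem not_extendable_of_overlap (w α : List A) (i j : ℕ)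
    (hα : IsRMRepeat w α) (hi : OccursAt w α i) (hj : OccursAt w α j)
    (hij : i < j) (hov : j < i + α.length) :
    ∀ β, β <+: α → β ≠ [] → β.length ≤ i + α.length - j →
      ¬ RightExtClosure w β α := by
  intro β hβα _ hβlen ⟨_, _, hmin⟩
  have hborder := drop_eq_take_of_occursAt hi hj hij.le
  set d := i + α.length - j
  have hlen : (α.take d).length = d := by simp; omega
  have hne : α.drop (j - i) ≠ [] := by simp; omega
  have hγ : IsRMRepeat w (α.take d) := hborder ▸ hα.drop hne
  refine hmin (α.take d) (prefix_of_prefix_length_le hβα (take_prefix d α) (by omega))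
    (take_prefix d α) (fun h => ?_) hγ
  have := congrArg length h
  omega
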